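/- For a finite dimensional $G$-graded $G$-module $H$, the reflection-duality identity $(b_i \cdot x)(v) = x(b_{n-i} \cdot v)$ holds for every standard braid generator $b_i$, every $x \in (H^*)^{\otimes n}$, and every $v \in H^{\otimes n}$, where the pairing reverses the order of factors: $(x_1\otimes\cdots\otimes x_n)(v_1\otimes\cdots\otimes v_n) = x_n(v_1)\cdots x_1(v_n)$. -/

import Mathlib

/-! Both sides are bilinear, so it suffices to compare them on pure tensors, where each is a sum
over `g : G` of products of `m + 1` scalars. The reflection `j ↦ j.rev` of positions carries the
adjacent transposition at `i.rev` to the one at `i`; after substituting `g ↦ g⁻¹` the factors then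
match one by one, because the projection of `H^*` onto degree `g` is the transpose of the projection
of `H` onto degree `g⁻¹`, and the dual action of `g` is the transpose of the action of `g⁻¹`. -/

open scoped TensorProduct
open PiTensorProduct DirectSum

variable {k : Type*} [Field k] {G : Type*} [Group G] [Fintype G] [DecidableEq G]

/-- The projection onto the homogeneous component of degree `g` of a `G`-graded module. -/
noncomputable def gradedProj {H : Type*} [AddCommGroup H] [Module k H]
    (𝒜 : G → Submodule k H) [DirectSum.Decomposition 𝒜] (g : G) : H →ₗ[k] H :=
  (𝒜 g).subtype ∘ₗ (DirectSum.component k G (fun g => ↥(𝒜 g)) g) ∘ₗ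
    (DirectSum.decomposeLinearEquiv 𝒜).toLinearMap

/-- The action of the braid generator `b_{i+1}` on the `n`-th tensor power `H^{⊗n}`
(`n = m+1`) of a `G`-graded `G`-module `H` via the braiding of `G`-graded `G`-modules:
on a tensor whose `i`-th factor `v_g` is homogeneous of degree `g`, it sends
`⋯ ⊗ v_g ⊗ w ⊗ ⋯` to `⋯ ⊗ (g · w) ⊗ v_g ⊗ ⋯`. -/
noncomputable def braidGen {m : ℕ} {H : Type*} [AddCommGroup H] [Module k H]
    (𝒜 : G → Submodule k H) [DirectSum.Decomposition 𝒜] (ρ : G → (H ≃ₗ[k] H))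
    (i : Fin m) :
    (⨂[k] (_ : Fin (m + 1)), H) →ₗ[k] ⨂[k] (_ : Fin (m + 1)), H :=
  ∑ g : G,
    (PiTensorProduct.reindex k (fun _ : Fin (m + 1) => H)
        (Equiv.swap i.castSucc i.succ)).toLinearMap ∘ₗ
      PiTensorProduct.map (fun j =>
        if j = i.castSucc then gradedProj 𝒜 g
        else if j = i.succ then (ρ g).toLinearMap
        else LinearMap.id)

/-- The dual grading on `H^*`: `(H^*)_m = (H_{m⁻¹})^*`. -/
def dualGrading {H : Type*} [AddCommGroup H] [Module k H]
    (𝒜 : G → Submodule k H) (mdeg : G) : Submodule k (Module.Dual k H) :=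
  ⨅ (m' : G) (_ : m' ≠ mdeg⁻¹), (𝒜 m').dualAnnihilator

/-- The order-reversing pairing `(H^*)^{⊗n} → (H^{⊗n})^*`:
`(x_1 ⊗ ⋯ ⊗ x_n)(v_1 ⊗ ⋯ ⊗ v_n) = x_n(v_1) · x_{n-1}(v_2) ⋯ x_1(v_n)`. -/
noncomputable def tensorPairing (n : ℕ) (H : Type*) [AddCommGroup H] [Module k H] :
    (⨂[k] (_ : Fin n), Module.Dual k H) →ₗ[k] (⨂[k] (_ : Fin n), H) →ₗ[k] k :=
  (LinearMap.llcomp k (⨂[k] (_ : Fin n), H) (⨂[k] (_ : Fin n), k) k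
      (PiTensorProduct.lift (MultilinearMap.mkPiAlgebra k (Fin n) k))) ∘ₗ
    PiTensorProduct.piTensorHomMap ∘ₗ
      (PiTensorProduct.reindex k (fun _ : Fin n => Module.Dual k H) Fin.revPerm).toLinearMap

section GradedProj

variable {H : Type*} [AddCommGroup H] [Module k H] (𝒜 : G → Submodule k H) [Decomposition 𝒜]

omit [Group G] [Fintype G] in
lemma gradedProj_of_mem {g : G} {v : H} (hv : v ∈ 𝒜 g) : gradedProj 𝒜 g v = v :=
  decompose_of_mem_same 𝒜 hv

omit [Group G] [Fintype G] in
lemma gradedProj_of_mem_ne {g g' : G} {v : H} (hv : v ∈ 𝒜 g) (hne : g ≠ g') :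
    gradedProj 𝒜 g' v = 0 :=
  decompose_of_mem_ne 𝒜 hv hne

omit [Group G] in
lemma sum_gradedProj (v : H) : ∑ g : G, gradedProj 𝒜 g v = v := by
  conv_rhs => rw [← (decompose 𝒜).symm_apply_apply v, ← sum_univ_of (decompose 𝒜 v)]
  simp [gradedProj]
  rfl

omit [Group G] in
lemma gradedProj_eq_of_forall_mem (p : G → H →ₗ[k] H) (hmem : ∀ g v, p g v ∈ 𝒜 g)
    (hsum : ∀ v, ∑ g : G, p g v = v) (g : G) (v : H) : gradedProj 𝒜 g v = p g v := by
  conv_lhs => rw [← hsum v]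
  rw [map_sum, Finset.sum_eq_single g]
  · exact gradedProj_of_mem 𝒜 (hmem g v)
  · exact fun g' _ hne => gradedProj_of_mem_ne 𝒜 (hmem g' v) hne
  · simp

omit [Fintype G] in
lemma comp_gradedProj_inv_mem_dualGrading (g : G) (x : Module.Dual k H) :
    x ∘ₗ gradedProj 𝒜 g⁻¹ ∈ dualGrading 𝒜 g := by
  simp only [dualGrading, Submodule.mem_iInf, Submodule.mem_dualAnnihilator]
  intro g' hne w hw
  simp [gradedProj_of_mem_ne 𝒜 hw hne]

lemma sum_comp_gradedProj_inv (x : Module.Dual k H) : ∑ g : G, x ∘ₗ gradedProj 𝒜 g⁻¹ = x := by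
  ext v
  simp only [LinearMap.coe_sum, Finset.sum_apply, LinearMap.comp_apply, ← map_sum x]
  exact congrArg x ((Equiv.sum_comp (Equiv.inv G) (gradedProj 𝒜 · v)).trans (sum_gradedProj 𝒜 v))

lemma gradedProj_dualGrading_apply [Decomposition (dualGrading 𝒜)] (g : G)
    (x : Module.Dual k H) (v : H) :
    gradedProj (dualGrading 𝒜) g x v = x (gradedProj 𝒜 g⁻¹ v) :=
  congrArg (· v) <| gradedProj_eq_of_forall_mem (dualGrading 𝒜)
    (fun g => LinearMap.lcomp k k (gradedProj 𝒜 g⁻¹))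
    (comp_gradedProj_inv_mem_dualGrading 𝒜) (sum_comp_gradedProj_inv 𝒜) g x

end GradedProj

section Braiding

variable {m : ℕ} {H : Type*} [AddCommGroup H] [Module k H]

noncomputable def braidFactor (𝒜 : G → Submodule k H) [Decomposition 𝒜] (ρ : G → (H ≃ₗ[k] H))
    (i : Fin m) (g : G) (j : Fin (m + 1)) : H →ₗ[k] H :=
  if j = i.castSucc then gradedProj 𝒜 g
  else if j = i.succ then (ρ g).toLinearMap
  else LinearMap.id

omit [Group G] in
lemma braidGen_tprod (𝒜 : G → Submodule k H) [Decomposition 𝒜] (ρ : G → (H ≃ₗ[k] H))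
    (i : Fin m) (v : Fin (m + 1) → H) :
    braidGen 𝒜 ρ i (tprod k v) = ∑ g : G, tprod k fun j =>
      braidFactor 𝒜 ρ i g (Equiv.swap i.castSucc i.succ j) (v (Equiv.swap i.castSucc i.succ j)) := by
  simp [braidGen, braidFactor, map_tprod, reindex_tprod]
  rfl

omit [Group G] [Fintype G] in
lemma tensorPairing_tprod (n : ℕ) (x : Fin n → Module.Dual k H) (v : Fin n → H) :
    tensorPairing n H (tprod k x) (tprod k v) = ∏ j, x j.rev (v j) := by
  simp [tensorPairing, reindex_tprod]

lemma Fin.rev_swap_rev_castSucc_rev_succ (i : Fin m) (j : Fin (m + 1)) :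
    (Equiv.swap i.rev.castSucc i.rev.succ j).rev = Equiv.swap i.castSucc i.succ j.rev := by
  rw [← Fin.rev_injective.swap_apply, Fin.rev_castSucc, Fin.rev_succ, Fin.rev_rev,
    Equiv.swap_comm]

lemma braidFactor_dualGrading_rev_apply (𝒜 : G → Submodule k H) [Decomposition 𝒜]
    [Decomposition (dualGrading 𝒜)] (ρ : G → (H ≃ₗ[k] H)) (i : Fin m) (g : G)
    (j : Fin (m + 1)) (x : Module.Dual k H) (v : H) :
    braidFactor (dualGrading 𝒜) (fun g => (ρ g⁻¹).dualMap) i g j.rev x v =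
      x (braidFactor 𝒜 ρ i.rev g⁻¹ (Equiv.swap i.rev.castSucc i.rev.succ j) v) := by
  have hi : i.castSucc ≠ i.succ := Fin.castSucc_lt_succ.ne
  have hi' : i.rev.castSucc ≠ i.rev.succ := Fin.castSucc_lt_succ.ne
  rcases eq_or_ne j i.rev.castSucc with rfl | hj₁
  · simp [braidFactor, Fin.rev_castSucc, hi.symm, hi'.symm]
  rcases eq_or_ne j i.rev.succ with rfl | hj₂
  · simp [braidFactor, Fin.rev_succ, gradedProj_dualGrading_apply]
  have hr₁ : j.rev ≠ i.castSucc := by rwa [ne_eq, Fin.rev_eq_iff, Fin.rev_castSucc]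
  have hr₂ : j.rev ≠ i.succ := by rwa [ne_eq, Fin.rev_eq_iff, Fin.rev_succ]
  simp [braidFactor, Equiv.swap_apply_of_ne_of_ne hj₁ hj₂, hj₁, hj₂, hr₁, hr₂]

end Braiding

theorem reflection_duality_identity_general {m : ℕ}
    {H : Type*} [AddCommGroup H] [Module k H]
    (𝒜 : G → Submodule k H) [DirectSum.Decomposition 𝒜]
    [DirectSum.Decomposition (dualGrading 𝒜)]
    (ρ : G →* (H ≃ₗ[k] H))
    (i : Fin m) (x : ⨂[k] (_ : Fin (m + 1)), Module.Dual k H)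
    (v : ⨂[k] (_ : Fin (m + 1)), H) :
    tensorPairing (m + 1) H
        (braidGen (dualGrading 𝒜) (fun g => (ρ g⁻¹).dualMap) i x) v =
      tensorPairing (m + 1) H x (braidGen 𝒜 (fun g => ρ g) i.rev v) := by
  suffices h : tensorPairing (m + 1) H ∘ₗ braidGen (dualGrading 𝒜) (fun g => (ρ g⁻¹).dualMap) i =
      (tensorPairing (m + 1) H).compl₂ (braidGen 𝒜 (fun g => ρ g) i.rev) from
    LinearMap.congr_fun₂ h x v
  ext x v
  simp only [LinearMap.compMultilinearMap_apply, LinearMap.comp_apply, LinearMap.compl₂_apply,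
    braidGen_tprod, map_sum, LinearMap.sum_apply, tensorPairing_tprod]
  refine Fintype.sum_equiv (Equiv.inv G) _ _ fun g => ?_
  refine Fintype.prod_equiv (Equiv.swap i.rev.castSucc i.rev.succ) _ _ fun j => ?_
  rw [← Fin.rev_swap_rev_castSucc_rev_succ, braidFactor_dualGrading_rev_apply, Equiv.inv_apply,
    Equiv.swap_apply_self]

/-- The reflection-duality identity: for every standard braid generator `b_i`,
every `x ∈ (H^*)^{⊗n}` and every `v ∈ H^{⊗n}`, `(b_i · x)(v) = x(b_{n-i} · v)`,
where `(H^*)^{⊗n}` carries the braiding coming from the dual `G`-graded `G`-module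
structure `(γ · x)(v) = x(γ⁻¹ · v)`, `(H^*)_m = (H_{m⁻¹})^*`, and the pairing reverses
the order of the factors. -/
theorem reflection_duality_identity {m : ℕ}
    {H : Type*} [AddCommGroup H] [Module k H] [FiniteDimensional k H]
    (𝒜 : G → Submodule k H) [DirectSum.Decomposition 𝒜]
    [DirectSum.Decomposition (dualGrading 𝒜)]
    (ρ : G →* (H ≃ₗ[k] H))
    (hcompat : ∀ (γ mdeg : G), (𝒜 mdeg).map (ρ γ).toLinearMap = 𝒜 (γ * mdeg * γ⁻¹))
    (i : Fin m) (x : ⨂[k] (_ : Fin (m + 1)), Module.Dual k H)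
    (v : ⨂[k] (_ : Fin (m + 1)), H) :
    tensorPairing (m + 1) H
        (braidGen (dualGrading 𝒜) (fun g => (ρ g⁻¹).dualMap) i x) v =
      tensorPairing (m + 1) H x (braidGen 𝒜 (fun g => ρ g) i.rev v) :=
  reflection_duality_identity_general 𝒜 ρ i x v
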